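/- Let I = I_{(m_1,…,m_t)} ⊆ S be a canonical critical monomial ideal. Then, as a K-vector space, I is the internal direct sum I = ⊕_{j=1}^{t−1} x_j (∏_{k=1}^{j} m_k) K[x_j, x_{j+1},…,x_n] ⊕ (∏_{k=1}^{t} m_k) K[x_t,…,x_n], where each summand u K[x_j,…,x_n] is the K-span of the monomials u·v with v a monomial in the variables x_j,…,x_n. -/

import Mathlib

open MvPolynomial

noncomputable section

variable (K : Type*) [Field K]

/-- The set of monomials (with coefficient 1) whose variables lie in `Z`. -/
def monomialsIn {σ : Type*} (Z : Set σ) : Set (MvPolynomial σ K) :=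
  {p | ∃ a : σ →₀ ℕ, ↑a.support ⊆ Z ∧ p = monomial a 1}

/-- `u K[Z]` : the `K`-linear span of the polynomials `u * v`, `v` a monomial in `Z`. -/
def stanleySpace {σ : Type*} (u : MvPolynomial σ K) (Z : Set σ) :
    Submodule K (MvPolynomial σ K) :=
  Submodule.span K ((u * ·) '' monomialsIn K Z)


/-- The generators `x₁m₁, x₂m₁m₂, …, x_{t-1}m₁⋯m_{t-1}, m₁⋯m_t` (0-indexed) of the
canonical critical monomial ideal `I_{(m₁,…,m_t)}`. -/
def ccGens {n t : ℕ} (ht : t ≤ n) (m : Fin t → MvPolynomial (Fin n) K) (j : Fin t) :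
    MvPolynomial (Fin n) K :=
  (if (j : ℕ) < t - 1 then X (Fin.castLE ht j) else 1) * ∏ k ∈ Finset.Iic j, m k

/-!
All the generators are monomials, so everything is a statement about exponent vectors: a
Stanley space `x^b K[Z]` is spanned by the monomials with exponent in `b + ℕ^Z`, and the ideal by
the monomials whose exponent lies above some generator exponent `b_j`. Distinct monomials are
linearly independent, so it suffices that the sets `b_j + ℕ^{x_j,…,x_n}` partition the upper
closure of `{b_j}`. They are disjoint because the exponent of `x_i` in `b_j` is smaller than in
`b_i` for `i < j`, while monomials of `K[x_j,…,x_n]` do not involve `x_i`. They cover it because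
if `b_j ≤ e` with `j` minimal and `e - b_j` involved `x_i` for some `i < j`, then
`b_i ≤ b_j + e_{x_i} ≤ e` would contradict the minimality of `j`.
-/

open Function

namespace MvPolynomial

variable {σ R : Type*} [CommSemiring R]

lemma restrictSupport_iUnion {ι : Type*} (s : ι → Set (σ →₀ ℕ)) :
    restrictSupport R (⋃ i, s i) = ⨆ i, restrictSupport R (s i) := by
  simp only [restrictSupport_eq_span, Set.image_iUnion, Submodule.span_iUnion]

lemma disjoint_restrictSupport {s t : Set (σ →₀ ℕ)} (h : Disjoint s t) :
    Disjoint (restrictSupport R s) (restrictSupport R t) := by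
  rw [Submodule.disjoint_def]
  intro x hs ht
  rw [mem_restrictSupport_iff] at hs ht
  rw [← support_eq_empty, ← Finset.coe_eq_empty, ← Set.subset_empty_iff]
  exact h.inter_eq ▸ Set.subset_inter hs ht

lemma iSupIndep_restrictSupport {ι : Type*} {s : ι → Set (σ →₀ ℕ)}
    (h : Pairwise (Disjoint on s)) : iSupIndep fun i => restrictSupport R (s i) := by
  intro i
  refine (disjoint_restrictSupport (s := s i) (t := ⋃ (j) (_ : j ≠ i), s j) ?_).mono_right ?_
  · exact Set.disjoint_iUnion₂_right.2 fun _ hj => h hj.symm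
  · exact iSup₂_le fun j hj =>
      restrictSupport_mono R (Set.subset_iUnion₂ (s := fun j _ => s j) j hj)

lemma restrictScalars_span_range_monomial {ι : Type*} (b : ι → σ →₀ ℕ) :
    (Ideal.span (Set.range fun i => monomial (b i) (1 : R))).restrictScalars R =
      restrictSupport R (upperClosure (Set.range b) : Set (σ →₀ ℕ)) := by
  ext x
  rw [Submodule.restrictScalars_mem, Set.range_comp' (monomial · (1 : R)) b,
    mem_ideal_span_monomial_image, mem_restrictSupport_iff]
  rfl

end MvPolynomial

def stanleyExponents {σ : Type*} (b : σ →₀ ℕ) (Z : Set σ) : Set (σ →₀ ℕ) :=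
  (b + ·) '' {c | ↑c.support ⊆ Z}

lemma stanleySpace_monomial {σ : Type*} (b : σ →₀ ℕ) (Z : Set σ) :
    stanleySpace K (monomial b 1) Z = restrictSupport K (stanleyExponents b Z) := by
  rw [stanleySpace, restrictSupport_eq_span, stanleyExponents, Set.image_image]
  congr 1
  ext p
  simp only [monomialsIn, Set.mem_image, Set.mem_ofPred_eq]
  constructor
  · rintro ⟨_, ⟨c, hc, rfl⟩, rfl⟩
    exact ⟨c, hc, by rw [monomial_mul, one_mul]⟩
  · rintro ⟨c, hc, rfl⟩
    exact ⟨_, ⟨c, hc, rfl⟩, by rw [monomial_mul, one_mul]⟩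

section Staircase

variable {n t : ℕ} (ht : t ≤ n) {b : Fin t → Fin n →₀ ℕ}

lemma pairwise_disjoint_stanleyExponents
    (hb : ∀ ⦃i j : Fin t⦄, i < j → b j (Fin.castLE ht i) < b i (Fin.castLE ht i)) :
    Pairwise (Disjoint on fun j : Fin t => stanleyExponents (b j) {k : Fin n | (j : ℕ) ≤ k}) := by
  refine (pairwise_disjoint_on _).2 fun i j hij => Set.disjoint_left.2 ?_
  rintro _ ⟨c, -, rfl⟩ ⟨c', hc', heq⟩
  have hc'i : c' (Fin.castLE ht i) = 0 := by
    by_contra h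
    have := hc' (Finsupp.mem_support_iff.2 h)
    simp only [Set.mem_ofPred_eq, Fin.val_castLE] at this
    exact absurd hij (not_lt.2 (Fin.le_def.2 this))
  have := DFunLike.congr_fun heq (Fin.castLE ht i)
  simp only [Finsupp.add_apply, hc'i] at this
  have := hb hij
  omega

lemma iUnion_stanleyExponents
    (hb : ∀ ⦃i j : Fin t⦄, i < j → b i ≤ b j + Finsupp.single (Fin.castLE ht i) 1) :
    ⋃ j, stanleyExponents (b j) {k : Fin n | (j : ℕ) ≤ k} = upperClosure (Set.range b) := by
  ext e
  simp only [Set.mem_iUnion, SetLike.mem_coe, mem_upperClosure, Set.exists_range_iff]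
  constructor
  · rintro ⟨j, c, -, rfl⟩
    exact ⟨j, le_self_add⟩
  · rintro ⟨j, hj⟩
    obtain ⟨i, hi, hmin⟩ := wellFounded_lt.has_min {i | b i ≤ e} ⟨j, hj⟩
    refine ⟨i, e - b i, fun p hp => ?_, add_tsub_cancel_of_le hi⟩
    by_contra hpi
    have hpi : (p : ℕ) < i := not_le.1 hpi
    obtain ⟨i', rfl⟩ : ∃ i' : Fin t, Fin.castLE ht i' = p := ⟨⟨p, hpi.trans i.isLt⟩, rfl⟩
    refine hmin i' ?_ hpi
    calc b i' ≤ b i + Finsupp.single (Fin.castLE ht i') 1 := hb hpi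
      _ ≤ b i + (e - b i) := add_le_add le_rfl (Finsupp.single_le_iff.2 ?_)
      _ = e := add_tsub_cancel_of_le hi
    exact Nat.one_le_iff_ne_zero.2 (Finsupp.mem_support_iff.1 hp)

end Staircase

section CriticalExponents

variable {n t : ℕ} (ht : t ≤ n) (a : Fin t → Fin n →₀ ℕ)

def ccExponent (j : Fin t) : Fin n →₀ ℕ :=
  (if (j : ℕ) < t - 1 then Finsupp.single (Fin.castLE ht j) 1 else 0) + ∑ k ∈ Finset.Iic j, a k

lemma ccGens_monomial :
    ccGens K ht (fun k => monomial (a k) 1) = fun j => monomial (ccExponent ht a j) 1 := by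
  ext1 j
  rw [ccGens, ccExponent, ← monomial_sum_one]
  split_ifs <;> simp only [X, monomial_mul, one_mul, zero_add]

variable {a}

lemma ccExponent_le_add_single {i j : Fin t} (hij : i < j) :
    ccExponent ht a i ≤ ccExponent ht a j + Finsupp.single (Fin.castLE ht i) 1 := by
  have hi : (i : ℕ) < t - 1 := by omega
  rw [ccExponent, if_pos hi, add_comm (Finsupp.single _ _)]
  have hsum : ∑ k ∈ Finset.Iic i, a k ≤ ∑ k ∈ Finset.Iic j, a k :=
    Finset.sum_le_sum_of_subset (Finset.Iic_subset_Iic.2 hij.le)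
  exact add_le_add (hsum.trans le_add_self) le_rfl

lemma sum_Iic_apply_castLE_of_le (ha : ∀ k : Fin t, ↑(a k).support ⊆ {p : Fin n | (k : ℕ) ≤ p})
    {i j : Fin t} (hij : i ≤ j) :
    (∑ k ∈ Finset.Iic j, a k) (Fin.castLE ht i) = (∑ k ∈ Finset.Iic i, a k) (Fin.castLE ht i) := by
  simp only [Finsupp.finsetSum_apply]
  refine (Finset.sum_subset (Finset.Iic_subset_Iic.2 hij) fun k _ hk => ?_).symm
  by_contra h
  have := ha k (Finsupp.mem_support_iff.2 h)
  simp only [Finset.mem_Iic, not_le, Set.mem_ofPred_eq, Fin.val_castLE] at hk this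
  exact absurd hk (not_lt.2 (Fin.le_def.2 this))

lemma ccExponent_apply_castLE_lt (ha : ∀ k : Fin t, ↑(a k).support ⊆ {p : Fin n | (k : ℕ) ≤ p})
    {i j : Fin t} (hij : i < j) :
    ccExponent ht a j (Fin.castLE ht i) < ccExponent ht a i (Fin.castLE ht i) := by
  have hi : (i : ℕ) < t - 1 := by omega
  have hji : Fin.castLE ht j ≠ Fin.castLE ht i := (Fin.castLE_injective ht).ne hij.ne'
  simp only [ccExponent, if_pos hi, Finsupp.add_apply, Finsupp.single_eq_same,
    sum_Iic_apply_castLE_of_le ht ha hij.le]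
  split_ifs <;> simp [hji]

end CriticalExponents

/-- As a `K`-vector space, the canonical critical monomial ideal
`I = I_{(m₁,…,m_t)}` is the internal direct sum
`I = ⊕_{j=1}^{t-1} x_j (m₁⋯m_j) K[x_j,…,x_n] ⊕ (m₁⋯m_t) K[x_t,…,x_n]`
(here the `j`-th summand, `0`-indexed `j : Fin t`, is `(ccGens j) K[x_j,…,x_n]`). -/
theorem canonical_critical_ideal_direct_sum
    {K : Type*} [Field K] {n t : ℕ} (ht : t ≤ n)
    (m : Fin t → MvPolynomial (Fin n) K)
    (hm : ∀ i : Fin t, ∃ a : Fin n →₀ ℕ,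
      ↑a.support ⊆ {k : Fin n | (i : ℕ) ≤ (k : ℕ)} ∧ m i = monomial a 1)
    (I : Ideal (MvPolynomial (Fin n) K))
    (hI : I = Ideal.span (Set.range (ccGens K ht m))) :
    iSupIndep (fun j : Fin t =>
        stanleySpace K (ccGens K ht m j) {k : Fin n | (j : ℕ) ≤ (k : ℕ)}) ∧
    (⨆ j : Fin t, stanleySpace K (ccGens K ht m j) {k : Fin n | (j : ℕ) ≤ (k : ℕ)})
      = Submodule.restrictScalars K I := by
  choose a ha hma using hm
  obtain rfl : m = fun k => monomial (a k) 1 := funext hma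
  subst hI
  simp only [ccGens_monomial, stanleySpace_monomial]
  constructor
  · exact iSupIndep_restrictSupport <| pairwise_disjoint_stanleyExponents ht
      fun _ _ hij => ccExponent_apply_castLE_lt ht ha hij
  · rw [← restrictSupport_iUnion, restrictScalars_span_range_monomial,
      iUnion_stanleyExponents ht fun _ _ hij => ccExponent_le_add_single ht hij]
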